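/- Fix c1 > 0 and d ≥ 1, and let a(x) = exp(−c1|x|) for x ∈ ℝ^d. Set δ = c1 and b(x) = (1+|x|)^{d+δ} a(x). Then there exist constants c > 0 and ε = 1/4 such that for all n ≥ 1 and all x ∈ ℝ^d, the n-fold lattice convolution (b*b*…*b)(x) = Σ_{x_1,…,x_{n−1} ∈ ℤ^d} b(x−x_1) b(x_1−x_2) ⋯ b(x_{n−1}) satisfies (b^{*n})(x) ≤ c^n · b(εx). -/

import Mathlib

/-! The polynomial factor of `b` is absorbed by half of its exponential decay,
`b(x) ≤ K e^{-c1|x|/2}`. Convolving `e^{-α|·|}` with `e^{-2α|·|}` over the lattice only costs the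
constant `S = Σ_y e^{-α|y|}`, because `α|x-y| + 2α|y| ≥ α|x| + α|y|`. By induction
`b^{*n}(x) ≤ (K S)^n e^{-c1|x|/4} ≤ (K S)^n b(x/4)`. -/

open Real Finset

/-- `b(x) = (1+|x|)^{d+c1} e^{−c1|x|}` (the function `b` built from
`a(x) = e^{−c1|x|}` with `δ = c1`). -/
noncomputable def bfun (d : ℕ) (c1 : ℝ) (x : EuclideanSpace ℝ (Fin d)) : ℝ :=
  (1 + ‖x‖) ^ ((d : ℝ) + c1) * Real.exp (-c1 * ‖x‖)

/-- Embedding of the lattice `ℤ^d` into `ℝ^d`. -/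
noncomputable def emb (d : ℕ) (y : Fin d → ℤ) : EuclideanSpace ℝ (Fin d) :=
  (WithLp.equiv 2 (Fin d → ℝ)).symm fun i => (y i : ℝ)

/-- `iterConv d b n` is the `(n+1)`-fold lattice convolution `b * b * ⋯ * b`. -/
noncomputable def iterConv (d : ℕ) (b : EuclideanSpace ℝ (Fin d) → ℝ) :
    ℕ → EuclideanSpace ℝ (Fin d) → ℝ
  | 0 => b
  | n + 1 => fun x => ∑' y : Fin d → ℤ, iterConv d b n (x - emb d y) * b (emb d y)

lemma one_add_rpow_le_mul_exp {p γ : ℝ} (hp : 0 < p) (hγ : 0 < γ) :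
    ∃ K, 0 < K ∧ ∀ t, 0 ≤ t → (1 + t) ^ p ≤ K * exp (γ * t) := by
  set β := γ / p
  set M := max 1 β⁻¹
  have hMβ : 1 ≤ M * β := by
    calc (1 : ℝ) = β⁻¹ * β := (inv_mul_cancel₀ (by positivity)).symm
      _ ≤ M * β := by gcongr; exact le_max_right _ _
  refine ⟨M ^ p, by positivity, fun t ht => ?_⟩
  have hlin : 1 + t ≤ M * exp (β * t) :=
    calc 1 + t ≤ M * (1 + β * t) := by nlinarith [le_max_left 1 β⁻¹]
      _ ≤ M * exp (β * t) := by gcongr; linarith [add_one_le_exp (β * t)]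
  calc (1 + t) ^ p ≤ (M * exp (β * t)) ^ p := by gcongr
    _ = M ^ p * exp (γ * t) := by
      rw [mul_rpow (by positivity) (exp_pos _).le, ← exp_mul]
      congr 2
      simp only [β]
      field_simp

lemma bfun_nonneg (d : ℕ) (c1 : ℝ) (x : EuclideanSpace ℝ (Fin d)) : 0 ≤ bfun d c1 x := by
  unfold bfun; positivity

lemma bfun_le_exp (d : ℕ) {c1 : ℝ} (hc1 : 0 < c1) :
    ∃ K, 0 < K ∧ ∀ x, bfun d c1 x ≤ K * exp (-(c1 / 2) * ‖x‖) := by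
  obtain ⟨K, hK, hpoly⟩ :=
    one_add_rpow_le_mul_exp (p := (d : ℝ) + c1) (γ := c1 / 2) (by positivity) (by positivity)
  refine ⟨K, hK, fun x => ?_⟩
  calc bfun d c1 x ≤ K * exp (c1 / 2 * ‖x‖) * exp (-c1 * ‖x‖) := by
        unfold bfun; gcongr; exact hpoly _ (norm_nonneg x)
    _ = K * exp (-(c1 / 2) * ‖x‖) := by rw [mul_assoc, ← exp_add]; ring_nf

lemma exp_neg_mul_norm_le_bfun (d : ℕ) {c1 : ℝ} (hc1 : 0 ≤ c1) (x : EuclideanSpace ℝ (Fin d)) :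
    exp (-c1 * ‖x‖) ≤ bfun d c1 x := by
  unfold bfun
  refine le_mul_of_one_le_left (exp_pos _).le (one_le_rpow ?_ (by positivity))
  linarith [norm_nonneg x]

lemma summable_pi_prod {ι κ : Type*} [Fintype ι] {g : κ → ℝ} (hg0 : 0 ≤ g) (hg : Summable g) :
    Summable fun y : ι → κ => ∏ i, g (y i) := by
  classical
  refine summable_of_sum_le (c := ∏ _i : ι, ∑' k, g k)
    (fun y => prod_nonneg fun i _ => hg0 _) fun s => ?_
  have hs : s ⊆ Fintype.piFinset fun i => s.image (· i) := fun y hy =>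
    Fintype.mem_piFinset.2 fun i => mem_image_of_mem _ hy
  calc ∑ y ∈ s, ∏ i, g (y i)
      ≤ ∑ y ∈ Fintype.piFinset (fun i => s.image (· i)), ∏ i, g (y i) :=
        sum_le_sum_of_subset_of_nonneg hs fun y _ _ => prod_nonneg fun i _ => hg0 _
    _ = ∏ i, ∑ k ∈ s.image (· i), g k := (prod_univ_sum _ _).symm
    _ ≤ ∏ _i : ι, ∑' k, g k :=
        prod_le_prod (fun i _ => sum_nonneg fun k _ => hg0 k)
          fun i _ => hg.sum_le_tsum _ fun k _ => hg0 k

lemma summable_exp_neg_mul_abs_int {β : ℝ} (hβ : 0 < β) :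
    Summable fun k : ℤ => exp (-β * |(k : ℝ)|) := by
  have hnat : Summable fun n : ℕ => exp (n * -β) := summable_exp_nat_mul_iff.2 (by linarith)
  refine .of_nat_of_neg (hnat.congr fun n => ?_) (hnat.congr fun n => ?_) <;>
    simp [abs_of_nonneg (Nat.cast_nonneg (α := ℝ) n), mul_comm]

lemma summable_exp_neg_mul_norm_emb (d : ℕ) {α : ℝ} (hα : 0 < α) :
    Summable fun y : Fin d → ℤ => exp (-α * ‖emb d y‖) := by
  -- `α / (d + 1)` rather than `α / d`, which would vanish for `d = 0`
  set β := α / (d + 1)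
  refine (summable_pi_prod (fun k => (exp_pos _).le)
    (summable_exp_neg_mul_abs_int (β := β) (by positivity))).of_nonneg_of_le
    (fun y => (exp_pos _).le) fun y => ?_
  have hcoord : ∑ i, |(y i : ℝ)| ≤ (d + 1) * ‖emb d y‖ :=
    calc ∑ i, |(y i : ℝ)| ≤ ∑ _i : Fin d, ‖emb d y‖ :=
          sum_le_sum fun i _ => PiLp.norm_apply_le (emb d y) i
      _ = d * ‖emb d y‖ := by simp
      _ ≤ (d + 1) * ‖emb d y‖ := by nlinarith [norm_nonneg (emb d y)]
  rw [← exp_sum, exp_le_exp, ← mul_sum]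
  calc -α * ‖emb d y‖ = -β * ((d + 1) * ‖emb d y‖) := by
        simp only [β]; field_simp
    _ ≤ -β * ∑ i, |(y i : ℝ)| := mul_le_mul_of_nonpos_left hcoord (neg_nonpos.2 (by positivity))

lemma one_le_tsum_exp_neg_mul_norm_emb (d : ℕ) {α : ℝ} (hα : 0 < α) :
    1 ≤ ∑' y : Fin d → ℤ, exp (-α * ‖emb d y‖) := by
  have hemb : emb d 0 = 0 := by ext i; simp [emb]
  simpa [hemb] using (summable_exp_neg_mul_norm_emb d hα).le_tsum 0 fun y _ => (exp_pos _).le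

lemma exp_neg_mul_norm_sub_mul_le {E : Type*} [SeminormedAddCommGroup E] {α : ℝ} (hα : 0 ≤ α)
    (x z : E) :
    exp (-α * ‖x - z‖) * exp (-(2 * α) * ‖z‖) ≤ exp (-α * ‖x‖) * exp (-α * ‖z‖) := by
  rw [← exp_add, ← exp_add, exp_le_exp]
  nlinarith [norm_le_norm_sub_add x z, norm_nonneg z]

lemma iterConv_le_exp {d : ℕ} {b : EuclideanSpace ℝ (Fin d) → ℝ} {K α : ℝ} (hα : 0 < α)
    (hK : 0 ≤ K) (hb0 : ∀ x, 0 ≤ b x) (hb : ∀ x, b x ≤ K * exp (-(2 * α) * ‖x‖))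
    (n : ℕ) (x : EuclideanSpace ℝ (Fin d)) :
    iterConv d b n x ≤ (K * ∑' y : Fin d → ℤ, exp (-α * ‖emb d y‖)) ^ (n + 1) * exp (-α * ‖x‖) := by
  set S := ∑' y : Fin d → ℤ, exp (-α * ‖emb d y‖)
  have hS : 1 ≤ S := one_le_tsum_exp_neg_mul_norm_emb d hα
  induction n generalizing x with
  | zero =>
    calc iterConv d b 0 x ≤ K * exp (-(2 * α) * ‖x‖) := hb x
      _ ≤ K * (S * exp (-α * ‖x‖)) := by
        refine mul_le_mul_of_nonneg_left ?_ hK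
        calc exp (-(2 * α) * ‖x‖) ≤ exp (-α * ‖x‖) := by
              rw [exp_le_exp]; nlinarith [norm_nonneg x]
          _ ≤ S * exp (-α * ‖x‖) := le_mul_of_one_le_left (exp_pos _).le hS
      _ = (K * S) ^ (0 + 1) * exp (-α * ‖x‖) := by ring
  | succ n ih =>
    set C := (K * S) ^ (n + 1)
    have hterm : ∀ y : Fin d → ℤ, iterConv d b n (x - emb d y) * b (emb d y) ≤
        C * K * exp (-α * ‖x‖) * exp (-α * ‖emb d y‖) := fun y =>
      calc iterConv d b n (x - emb d y) * b (emb d y)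
          ≤ C * exp (-α * ‖x - emb d y‖) * (K * exp (-(2 * α) * ‖emb d y‖)) := by
            gcongr
            · exact hb0 _
            · exact ih _
            · exact hb _
        _ = C * K * (exp (-α * ‖x - emb d y‖) * exp (-(2 * α) * ‖emb d y‖)) := by ring
        _ ≤ C * K * (exp (-α * ‖x‖) * exp (-α * ‖emb d y‖)) :=
            mul_le_mul_of_nonneg_left (exp_neg_mul_norm_sub_mul_le hα.le x _) (by positivity)
        _ = C * K * exp (-α * ‖x‖) * exp (-α * ‖emb d y‖) := by ring
    show ∑' y, iterConv d b n (x - emb d y) * b (emb d y) ≤ _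
    by_cases hsum : Summable fun y => iterConv d b n (x - emb d y) * b (emb d y)
    · calc ∑' y, iterConv d b n (x - emb d y) * b (emb d y)
          ≤ ∑' y : Fin d → ℤ, C * K * exp (-α * ‖x‖) * exp (-α * ‖emb d y‖) :=
            hsum.tsum_le_tsum hterm ((summable_exp_neg_mul_norm_emb d hα).mul_left _)
        _ = (K * S) ^ (n + 1 + 1) * exp (-α * ‖x‖) := by
            rw [tsum_mul_left, pow_succ]; ring
    · rw [tsum_eq_zero_of_not_summable hsum]
      positivity

theorem iterConv_bound_general (d : ℕ) (c1 : ℝ) (hc1 : 0 < c1) :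
    ∃ c : ℝ, 0 < c ∧ ∀ (n : ℕ) (x : EuclideanSpace ℝ (Fin d)),
      iterConv d (bfun d c1) n x ≤ c ^ (n + 1) * bfun d c1 ((1 / 4 : ℝ) • x) := by
  obtain ⟨K, hK, hb⟩ := bfun_le_exp d hc1
  have hα : 0 < c1 / 4 := by positivity
  have hb' : ∀ x, bfun d c1 x ≤ K * exp (-(2 * (c1 / 4)) * ‖x‖) := fun x => by
    convert hb x using 4; ring
  refine ⟨K * ∑' y : Fin d → ℤ, exp (-(c1 / 4) * ‖emb d y‖),
    mul_pos hK (one_pos.trans_le (one_le_tsum_exp_neg_mul_norm_emb d hα)), fun n x => ?_⟩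
  refine (iterConv_le_exp hα hK.le (bfun_nonneg d c1) hb' n x).trans ?_
  have hscale : -(c1 / 4) * ‖x‖ = -c1 * ‖(1 / 4 : ℝ) • x‖ := by
    rw [norm_smul]; norm_num; ring
  rw [hscale]
  gcongr
  exact exp_neg_mul_norm_le_bfun d hc1.le _

/-- with `a(x) = e^{−c1|x|}`, `δ = c1`, `b(x) = (1+|x|)^{d+δ} a(x)`
and `ε = 1/4`, there is `c > 0` such that for every `n ≥ 1` (here `n+1`-fold)
and every `x ∈ ℝ^d`, `(b^{*n})(x) ≤ c^n · b(εx)`. -/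
theorem iterConv_bound (d : ℕ) (hd : 1 ≤ d) (c1 : ℝ) (hc1 : 0 < c1) :
    ∃ c : ℝ, 0 < c ∧ ∀ (n : ℕ) (x : EuclideanSpace ℝ (Fin d)),
      iterConv d (bfun d c1) n x ≤ c ^ (n + 1) * bfun d c1 ((1 / 4 : ℝ) • x) :=
  iterConv_bound_general d c1 hc1
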